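/- arXiv:2602.01857 — 5 statements merged into one kernel-verified Lean document; each statement's English description precedes it below -/
import Mathlib

section
/- Let E be a finite-dimensional real inner product space and let U : E → ℝ be strictly convex, positive definite, differentiable everywhere, and homogeneous of degree 3/2. Let U* be the convex conjugate of U and let β > 0. Then the function V(x₀, x₁) := U(x₀) + (1+β)U*(x₁) − ⟨x₀, x₁⟩ on E × E is positive definite (V ≥ 0 with V(x₀,x₁) = 0 iff x₀ = 0 and x₁ = 0) and radially unbounded (V(x₀,x₁) → ∞ as ‖(x₀,x₁)‖ → ∞). -/
open RealInnerProductSpace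

/-- The convex (Fenchel) conjugate `U*(y) = sup_x (⟨x,y⟩ - U(x))`. -/
noncomputable def fenchelConj {E : Type*} [NormedAddCommGroup E] [InnerProductSpace ℝ E]
    (U : E → ℝ) (y : E) : ℝ :=
  ⨆ x : E, (⟪x, y⟫ - U x)

open Filter

/-! Homogeneity and compactness of the unit sphere give `m‖x‖^(3/2) ≤ U x ≤ M‖x‖^(3/2)` with
`m, M > 0`. The lower bound makes `U*` finite, so the Fenchel–Young inequality holds, and the upper
bound gives `U* y ≥ ‖y‖³/(8M²)`. Fenchel–Young at `x₀` gives `V ≥ β U*(x₁)`, and at `x₀/(1+β)`,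
by homogeneity, `V ≥ (1 - (1+β)^(-1/2)) U(x₀)`. Both lower bounds are nonnegative, vanish only
at `0` and grow without bound. -/

lemma Real.rpow_three_halves_eq_sqrt_pow {t : ℝ} (ht : 0 ≤ t) : t ^ ((3:ℝ)/2) = √t ^ 3 := by
  rw [Real.sqrt_eq_rpow, ← Real.rpow_mul_natCast ht]
  norm_num

lemma mul_sq_sub_mul_cube_le {a m r : ℝ} (ha : 0 ≤ a) (hm : 0 < m) (hr : 0 ≤ r) :
    a * r ^ 2 - m * r ^ 3 ≤ a ^ 3 / m ^ 2 := by
  rw [le_div_iff₀ (by positivity)]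
  rcases le_total (m * r) a with h | h
  · calc (a * r ^ 2 - m * r ^ 3) * m ^ 2
        ≤ a * (m * r) ^ 2 := by nlinarith [mul_nonneg (pow_pos hm 3).le (pow_nonneg hr 3)]
      _ ≤ a * a ^ 2 := by gcongr
      _ = a ^ 3 := by ring
  · have hneg : a * r ^ 2 - m * r ^ 3 ≤ 0 := by
      nlinarith [mul_nonneg (sq_nonneg r) (sub_nonneg.mpr h)]
    nlinarith [pow_nonneg ha 3, sq_nonneg m]

section Homogeneous

variable {E : Type*} [NormedAddCommGroup E] [InnerProductSpace ℝ E] {U : E → ℝ} {p : ℝ}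

def PosHomogeneous (p : ℝ) (U : E → ℝ) : Prop :=
  ∀ lam : ℝ, 0 < lam → ∀ x : E, U (lam • x) = lam ^ p * U x

lemma apply_eq_norm_rpow_mul_apply_normalize
    (hhom : PosHomogeneous p U) {x : E} (hx : x ≠ 0) :
    U x = ‖x‖ ^ p * U (‖x‖⁻¹ • x) := by
  have h := hhom ‖x‖ (norm_pos_iff.mpr hx) (‖x‖⁻¹ • x)
  rwa [smul_inv_smul₀ (norm_ne_zero_iff.mpr hx)] at h

variable [FiniteDimensional ℝ E]

lemma exists_pos_mul_norm_rpow_le (hcont : Continuous U) (hpos : ∀ x ≠ 0, 0 < U x)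
    (h0 : U 0 = 0) (hp : 0 < p)
    (hhom : PosHomogeneous p U) :
    ∃ m > 0, ∀ x, m * ‖x‖ ^ p ≤ U x := by
  obtain ⟨m, hm, hmU⟩ := (isCompact_sphere (0 : E) 1).exists_forall_le' hcont.continuousOn
    (a := 0) fun x hx => hpos x (ne_zero_of_mem_unit_sphere ⟨x, hx⟩)
  refine ⟨m, hm, fun x => ?_⟩
  rcases eq_or_ne x 0 with rfl | hx
  · simp [h0, Real.zero_rpow hp.ne']
  · rw [apply_eq_norm_rpow_mul_apply_normalize hhom hx, mul_comm]
    gcongr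
    exact hmU _ (mem_sphere_zero_iff_norm.mpr (norm_smul_inv_norm hx))

lemma exists_pos_le_mul_norm_rpow (hcont : Continuous U) (h0 : U 0 = 0)
    (hhom : PosHomogeneous p U) :
    ∃ M > 0, ∀ x, U x ≤ M * ‖x‖ ^ p := by
  obtain ⟨C, hC⟩ := (isCompact_sphere (0 : E) 1).bddAbove_image hcont.continuousOn
  refine ⟨max C 1, by positivity, fun x => ?_⟩
  rcases eq_or_ne x 0 with rfl | hx
  · simpa [h0] using Real.rpow_nonneg le_rfl p
  · rw [apply_eq_norm_rpow_mul_apply_normalize hhom hx, mul_comm]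
    gcongr
    exact (hC ⟨_, mem_sphere_zero_iff_norm.mpr (norm_smul_inv_norm hx), rfl⟩).trans
      (le_max_left _ _)

end Homogeneous

section FenchelConj

variable {E : Type*} [NormedAddCommGroup E] [InnerProductSpace ℝ E] {U : E → ℝ} {y : E}

lemma inner_sub_le_fenchelConj (hbdd : BddAbove (Set.range fun x => ⟪x, y⟫ - U x)) (x : E) :
    ⟪x, y⟫ - U x ≤ fenchelConj U y :=
  le_ciSup hbdd x

lemma fenchelConj_nonneg (hbdd : BddAbove (Set.range fun x => ⟪x, y⟫ - U x)) (h0 : U 0 = 0) :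
    0 ≤ fenchelConj U y := by
  simpa [h0] using inner_sub_le_fenchelConj hbdd 0

lemma fenchelConj_zero (hpos : ∀ x, 0 ≤ U x) (h0 : U 0 = 0) : fenchelConj U 0 = 0 := by
  have hle : ∀ x : E, ⟪x, 0⟫ - U x ≤ 0 := fun x => by simp [hpos x]
  exact le_antisymm (ciSup_le hle) (fenchelConj_nonneg ⟨0, Set.forall_mem_range.mpr hle⟩ h0)

lemma inner_sub_rpow_mul_le_mul_fenchelConj {p : ℝ}
    (hhom : PosHomogeneous p U)
    (hbdd : BddAbove (Set.range fun x => ⟪x, y⟫ - U x)) {c : ℝ} (hc : 0 < c) (x : E) :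
    ⟪x, y⟫ - c ^ (1 - p) * U x ≤ c * fenchelConj U y := by
  have h := inner_sub_le_fenchelConj hbdd (c⁻¹ • x)
  rw [real_inner_smul_left, hhom _ (inv_pos.mpr hc), Real.inv_rpow hc.le] at h
  calc ⟪x, y⟫ - c ^ (1 - p) * U x = c * (c⁻¹ * ⟪x, y⟫ - (c ^ p)⁻¹ * U x) := by
        rw [Real.rpow_sub hc, Real.rpow_one]
        field_simp
    _ ≤ c * fenchelConj U y := by gcongr

lemma bddAbove_range_inner_sub {m : ℝ} (hm : 0 < m)
    (hlow : ∀ x, m * ‖x‖ ^ ((3:ℝ)/2) ≤ U x) (y : E) :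
    BddAbove (Set.range fun x => ⟪x, y⟫ - U x) := by
  refine ⟨‖y‖ ^ 3 / m ^ 2, Set.forall_mem_range.mpr fun x => ?_⟩
  have hx := hlow x
  rw [Real.rpow_three_halves_eq_sqrt_pow (norm_nonneg x)] at hx
  calc ⟪x, y⟫ - U x ≤ ‖y‖ * √‖x‖ ^ 2 - m * √‖x‖ ^ 3 := by
        rw [Real.sq_sqrt (norm_nonneg x), mul_comm]
        linarith [real_inner_le_norm x y]
    _ ≤ ‖y‖ ^ 3 / m ^ 2 := mul_sq_sub_mul_cube_le (norm_nonneg y) hm (Real.sqrt_nonneg _)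

lemma norm_pow_three_div_le_fenchelConj {M : ℝ} (hM : 0 < M)
    (hup : ∀ x, U x ≤ M * ‖x‖ ^ ((3:ℝ)/2))
    (hbdd : BddAbove (Set.range fun x => ⟪x, y⟫ - U x)) :
    ‖y‖ ^ 3 / (8 * M ^ 2) ≤ fenchelConj U y := by
  -- test the supremum at a multiple of `y` of norm `s²`
  set s := ‖y‖ / (2 * M) with hs
  have hs0 : 0 ≤ s := by positivity
  set x := (s / (2 * M)) • y
  have hx : ‖x‖ = s ^ 2 := by
    rw [norm_smul, Real.norm_of_nonneg (by positivity), hs]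
    ring
  calc ‖y‖ ^ 3 / (8 * M ^ 2) = s ^ 2 * ‖y‖ - M * s ^ 3 := by
        rw [hs]
        field_simp
        ring
    _ = ⟪x, y⟫ - M * ‖x‖ ^ ((3:ℝ)/2) := by
        rw [Real.rpow_three_halves_eq_sqrt_pow (norm_nonneg x), hx, Real.sqrt_sq hs0,
          real_inner_smul_left, real_inner_self_eq_norm_sq, hs]
        field_simp
    _ ≤ ⟪x, y⟫ - U x := by linarith [hup x]
    _ ≤ fenchelConj U y := inner_sub_le_fenchelConj hbdd x

end FenchelConj

lemma exists_radius_le_of_tendsto_le {E F : Type*} [SeminormedAddCommGroup E]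
    [SeminormedAddCommGroup F] {V : E → F → ℝ} {f g : ℝ → ℝ}
    (hf : Tendsto f atTop atTop) (hg : Tendsto g atTop atTop)
    (hVf : ∀ x y, f ‖x‖ ≤ V x y) (hVg : ∀ x y, g ‖y‖ ≤ V x y) (M : ℝ) :
    ∃ R, ∀ x y, R ≤ ‖(x, y)‖ → M ≤ V x y := by
  obtain ⟨R₀, hR₀⟩ := eventually_atTop.mp (hf.eventually_ge_atTop M)
  obtain ⟨R₁, hR₁⟩ := eventually_atTop.mp (hg.eventually_ge_atTop M)
  refine ⟨max R₀ R₁, fun x y hR => ?_⟩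
  rcases le_max_iff.mp (Prod.norm_def (x, y) ▸ hR) with h | h
  · exact (hR₀ _ (le_of_max_le_left h)).trans (hVf x y)
  · exact (hR₁ _ (le_of_max_le_right h)).trans (hVg x y)

theorem lyapunov_candidate_posdef_radially_unbounded_general
    {E : Type*} [NormedAddCommGroup E] [InnerProductSpace ℝ E] [FiniteDimensional ℝ E]
    (U : E → ℝ)
    (hpos : ∀ x : E, 0 ≤ U x) (hdef : ∀ x : E, U x = 0 ↔ x = 0)
    (hdiff : Differentiable ℝ U)
    (hhom : ∀ lam : ℝ, 0 < lam → ∀ x : E, U (lam • x) = lam ^ ((3:ℝ)/2) * U x)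
    (β : ℝ) (hβ : 0 < β) :
    (∀ x₀ x₁ : E, 0 ≤ U x₀ + (1 + β) * fenchelConj U x₁ - ⟪x₀, x₁⟫) ∧
    (∀ x₀ x₁ : E,
      U x₀ + (1 + β) * fenchelConj U x₁ - ⟪x₀, x₁⟫ = 0 ↔ (x₀ = 0 ∧ x₁ = 0)) ∧
    (∀ M : ℝ, ∃ R : ℝ, ∀ x₀ x₁ : E, R ≤ ‖(x₀, x₁)‖ →
      M ≤ U x₀ + (1 + β) * fenchelConj U x₁ - ⟪x₀, x₁⟫) := by
  have h0 : U 0 = 0 := (hdef 0).mpr rfl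
  have hpos' : ∀ x ≠ 0, 0 < U x := fun x hx => (hpos x).lt_of_ne' (mt (hdef x).mp hx)
  obtain ⟨m, hm, hlow⟩ := exists_pos_mul_norm_rpow_le hdiff.continuous hpos' h0 (by norm_num) hhom
  obtain ⟨M, hM, hup⟩ := exists_pos_le_mul_norm_rpow hdiff.continuous h0 hhom
  have hbdd := bddAbove_range_inner_sub hm hlow
  set κ : ℝ := 1 - (1 + β) ^ (1 - (3:ℝ)/2) with hκdef
  have hκ : 0 < κ := sub_pos.mpr (Real.rpow_lt_one_of_one_lt_of_neg (by linarith) (by norm_num))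
  have hV₀ : ∀ x₀ x₁, κ * U x₀ ≤ U x₀ + (1 + β) * fenchelConj U x₁ - ⟪x₀, x₁⟫ := fun x₀ x₁ => by
    rw [hκdef]
    linarith [inner_sub_rpow_mul_le_mul_fenchelConj hhom (hbdd x₁) (by linarith : 0 < 1 + β) x₀]
  have hV₁ : ∀ x₀ x₁, β * fenchelConj U x₁ ≤ U x₀ + (1 + β) * fenchelConj U x₁ - ⟪x₀, x₁⟫ :=
    fun x₀ x₁ => by linarith [inner_sub_le_fenchelConj (hbdd x₁) x₀]
  refine ⟨fun x₀ x₁ => (mul_nonneg hβ.le (fenchelConj_nonneg (hbdd x₁) h0)).trans (hV₁ x₀ x₁),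
    fun x₀ x₁ => ⟨fun hV => ⟨?_, ?_⟩, ?_⟩, ?_⟩
  · exact (hdef x₀).mp (le_antisymm (nonpos_of_mul_nonpos_right (hV ▸ hV₀ x₀ x₁) hκ) (hpos x₀))
  · have hconj : fenchelConj U x₁ ≤ 0 := nonpos_of_mul_nonpos_right (hV ▸ hV₁ x₀ x₁) hβ
    by_contra hx₁
    have : 0 < ‖x₁‖ ^ 3 / (8 * M ^ 2) := by positivity
    linarith [norm_pow_three_div_le_fenchelConj hM hup (hbdd x₁)]
  · rintro ⟨rfl, rfl⟩
    simp [h0, fenchelConj_zero hpos h0]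
  · exact exists_radius_le_of_tendsto_le
      (((tendsto_rpow_atTop (by norm_num)).const_mul_atTop hm).const_mul_atTop hκ)
      (((tendsto_pow_atTop three_ne_zero).atTop_div_const (by positivity)).const_mul_atTop hβ)
      (fun x₀ x₁ => (mul_le_mul_of_nonneg_left (hlow x₀) hκ.le).trans (hV₀ x₀ x₁))
      (fun x₀ x₁ => (mul_le_mul_of_nonneg_left
        (norm_pow_three_div_le_fenchelConj hM hup (hbdd x₁)) hβ.le).trans (hV₁ x₀ x₁))

/-- the Lyapunov candidate `V(x₀,x₁) = U(x₀) + (1+β)U*(x₁) - ⟨x₀,x₁⟩`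
is positive definite and radially unbounded. -/
theorem lyapunov_candidate_posdef_radially_unbounded
    {E : Type*} [NormedAddCommGroup E] [InnerProductSpace ℝ E] [FiniteDimensional ℝ E]
    (U : E → ℝ)
    (hconv : StrictConvexOn ℝ Set.univ U)
    (hpos : ∀ x : E, 0 ≤ U x) (hdef : ∀ x : E, U x = 0 ↔ x = 0)
    (hdiff : Differentiable ℝ U)
    (hhom : ∀ lam : ℝ, 0 < lam → ∀ x : E, U (lam • x) = lam ^ ((3:ℝ)/2) * U x)
    (β : ℝ) (hβ : 0 < β) :
    (∀ x₀ x₁ : E, 0 ≤ U x₀ + (1 + β) * fenchelConj U x₁ - ⟪x₀, x₁⟫) ∧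
    (∀ x₀ x₁ : E,
      U x₀ + (1 + β) * fenchelConj U x₁ - ⟪x₀, x₁⟫ = 0 ↔ (x₀ = 0 ∧ x₁ = 0)) ∧
    (∀ M : ℝ, ∃ R : ℝ, ∀ x₀ x₁ : E, R ≤ ‖(x₀, x₁)‖ →
      M ≤ U x₀ + (1 + β) * fenchelConj U x₁ - ⟪x₀, x₁⟫) :=
  lyapunov_candidate_posdef_radially_unbounded_general U hpos hdef hdiff hhom β hβ
end

section
/- Let k > 0 and let V : [0,∞) → [0,∞) be locally absolutely continuous with V'(t) ≤ −k·V(t)^{2/3} for almost every t ≥ 0. Then V(t) = 0 for all t ≥ 3·V(0)^{1/3}/k. -/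
open MeasureTheory


private lemma cube_poly_aux {y D : ℝ} (hy : 0 < y) (hD : 0 < D)
    (hC : 0 ≤ 9*y^2 + 3*D*y - D^2) : 0 ≤ D^3 - 9*D^2*y + 135*y^3 := by
  nlinarith [mul_nonneg (sq_nonneg (D - 3*y)) (by linarith : (0:ℝ) ≤ D + 6*y),
    mul_nonneg (by linarith : (0:ℝ) ≤ 9*y) hC]

private lemma cube_poly {x y D : ℝ} (hy : 0 < y) (hD : 0 < D) (hx : 0 ≤ x)
    (h : y^3 + D*y^2 ≤ x^3) : 9*y^2 + 3*D*y - D^2 ≤ 9*y*x := by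
  by_cases hC : 0 ≤ 9*y^2 + 3*D*y - D^2
  · have haux := cube_poly_aux hy hD hC
    have hcube : (9*y^2 + 3*D*y - D^2)^3 ≤ (9*y*x)^3 := by
      nlinarith [mul_nonneg (pow_pos hD 3).le haux, pow_pos hy 3,
        mul_le_mul_of_nonneg_left h (by positivity : (0:ℝ) ≤ 729*y^3)]
    exact le_of_pow_le_pow_left₀ (by norm_num) (by positivity) hcube
  · push_neg at hC
    nlinarith [mul_nonneg hy.le hx]

private lemma cube_step {x y D m : ℝ} (hm : 0 < m) (hmy : m ≤ y) (hD : 0 < D)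
    (hx : 0 ≤ x) (h : y^3 + D*y^2 ≤ x^3) :
    y + D/3 - D^2/(9*m) ≤ x := by
  have hy : 0 < y := lt_of_lt_of_le hm hmy
  have h1 := cube_poly hy hD hx h
  have hq9 : D^2/(9*y) * (9*y) = D^2 := div_mul_cancel₀ _ (by positivity)
  have h2 : y + D/3 - D^2/(9*y) ≤ x := by nlinarith [h1, hq9, hy]
  have h3 : D^2/(9*y) ≤ D^2/(9*m) :=
    div_le_div_of_nonneg_left (by positivity) (by positivity) (by linarith)
  linarith

/-- comparison lemma / finite settling time.  If `V : [0,∞) → [0,∞)` is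
locally absolutely continuous (encoded by the integral representation `V t = V 0 + ∫₀ᵗ V'`
with `V'` locally integrable) and `V'(t) ≤ -k V(t)^{2/3}` almost everywhere, then
`V(t) = 0` for all `t ≥ 3 V(0)^{1/3} / k`. -/
theorem finite_settling_time
    (k : ℝ) (hk : 0 < k) (V V' : ℝ → ℝ)
    (hnonneg : ∀ t : ℝ, 0 ≤ t → 0 ≤ V t)
    (hint : ∀ t : ℝ, 0 ≤ t → IntervalIntegrable V' volume 0 t)
    (hrep : ∀ t : ℝ, 0 ≤ t → V t = V 0 + ∫ τ in (0:ℝ)..t, V' τ)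
    (hineq : ∀ᵐ t ∂(volume.restrict (Set.Ici (0:ℝ))),
      V' t ≤ -k * (V t) ^ ((2:ℝ)/3)) :
    ∀ t : ℝ, 3 * (V 0) ^ ((1:ℝ)/3) / k ≤ t → V t = 0 := by
  have hV0 : 0 ≤ V 0 := hnonneg 0 le_rfl
  -- interval integrability on subintervals
  have hII : ∀ a b : ℝ, 0 ≤ a → a ≤ b → IntervalIntegrable V' volume a b := by
    intro a b ha hab
    exact (hint b (ha.trans hab)).mono_set (by
      rw [Set.uIcc_of_le hab, Set.uIcc_of_le (ha.trans hab)]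
      exact Set.Icc_subset_Icc ha le_rfl)
  -- integral identity
  have hid : ∀ a b : ℝ, 0 ≤ a → a ≤ b → V b - V a = ∫ τ in a..b, V' τ := by
    intro a b ha hab
    have h := intervalIntegral.integral_add_adjacent_intervals (hint a ha) (hII a b ha hab)
    rw [hrep b (ha.trans hab), hrep a ha]
    linarith
  -- a.e. inequality on compact intervals
  have hae : ∀ a b : ℝ, 0 ≤ a →
      (∀ᵐ τ ∂(volume.restrict (Set.Icc a b)), V' τ ≤ -k * (V τ) ^ ((2:ℝ)/3)) := by
    intro a b ha
    exact hineq.filter_mono (ae_mono (Measure.restrict_mono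
      (fun x hx => le_trans ha hx.1) le_rfl))
  -- monotonicity
  have hmono : ∀ a b : ℝ, 0 ≤ a → a ≤ b → V b ≤ V a := by
    intro a b ha hab
    have hVab := hid a b ha hab
    have hnp : (∫ τ in a..b, V' τ) ≤ ∫ τ in a..b, (0:ℝ) := by
      apply intervalIntegral.integral_mono_ae_restrict hab (hII a b ha hab)
        intervalIntegrable_const
      filter_upwards [hae a b ha, ae_restrict_mem measurableSet_Icc] with τ hτ hτmem
      have h0 : 0 ≤ V τ := hnonneg τ (le_trans ha hτmem.1)
      have h2 : 0 ≤ (V τ) ^ ((2:ℝ)/3) := Real.rpow_nonneg h0 _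
      nlinarith
    simp only [intervalIntegral.integral_zero] at hnp
    linarith
  -- key integral inequality
  have hkey : ∀ a b : ℝ, 0 ≤ a → a ≤ b →
      V b + k * (b - a) * (V b) ^ ((2:ℝ)/3) ≤ V a := by
    intro a b ha hab
    have hVab := hid a b ha hab
    have hle : (∫ τ in a..b, V' τ) ≤ ∫ τ in a..b, (-k * (V b) ^ ((2:ℝ)/3)) := by
      apply intervalIntegral.integral_mono_ae_restrict hab (hII a b ha hab)
        intervalIntegrable_const
      filter_upwards [hae a b ha, ae_restrict_mem measurableSet_Icc] with τ h1 h2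
      have hVb : 0 ≤ V b := hnonneg b (ha.trans hab)
      have hVτb : V b ≤ V τ := hmono τ b (le_trans ha h2.1) h2.2
      have h3 : (V b) ^ ((2:ℝ)/3) ≤ (V τ) ^ ((2:ℝ)/3) :=
        Real.rpow_le_rpow hVb hVτb (by norm_num)
      nlinarith
    rw [intervalIntegral.integral_const, smul_eq_mul] at hle
    nlinarith
  intro t ht
  set T : ℝ := 3 * (V 0) ^ ((1:ℝ)/3) / k with hTdef
  clear_value T
  have hT0 : 0 ≤ T := by
    rw [hTdef]
    have : 0 ≤ (V 0) ^ ((1:ℝ)/3) := Real.rpow_nonneg hV0 _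
    positivity
  have ht0 : 0 ≤ t := hT0.trans ht
  by_contra hVt
  have hVtpos : 0 < V t := lt_of_le_of_ne (hnonneg t ht0) (Ne.symm hVt)
  have hVTpos : 0 < V T := lt_of_lt_of_le hVtpos (hmono T t hT0 ht)
  have hV0pos : 0 < V 0 := lt_of_lt_of_le hVTpos (hmono 0 T le_rfl hT0)
  set w : ℝ → ℝ := fun s => (V s) ^ ((1:ℝ)/3) with hwdef
  clear_value w
  have hw3 : ∀ s, 0 ≤ s → (w s) ^ (3:ℕ) = V s := by
    intro s hs
    have hVs := hnonneg s hs
    rw [hwdef]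
    rw [← Real.rpow_natCast ((V s) ^ ((1:ℝ)/3)) 3, ← Real.rpow_mul hVs]
    norm_num
  have hw2 : ∀ s, 0 ≤ s → (w s) ^ (2:ℕ) = (V s) ^ ((2:ℝ)/3) := by
    intro s hs
    have hVs := hnonneg s hs
    rw [hwdef]
    rw [← Real.rpow_natCast ((V s) ^ ((1:ℝ)/3)) 2, ← Real.rpow_mul hVs]
    norm_num
  have hwnn : ∀ s, 0 ≤ s → 0 ≤ w s := by
    intro s hs
    rw [hwdef]
    exact Real.rpow_nonneg (hnonneg s hs) _
  set W0 : ℝ := w 0 with hW0def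
  set m : ℝ := w T with hmdef
  clear_value W0 m
  have hmpos : 0 < m := by
    rw [hmdef, hwdef]; exact Real.rpow_pos_of_pos hVTpos _
  have hW0pos : 0 < W0 := by
    rw [hW0def, hwdef]; exact Real.rpow_pos_of_pos hV0pos _
  have hkT : k * T = 3 * W0 := by
    rw [hTdef, hW0def, hwdef]
    field_simp
  have hTpos : 0 < T := by nlinarith
  obtain ⟨n, hn⟩ := exists_nat_gt (W0^2 / m^2)
  have hNpos : (0:ℝ) < n := lt_trans (by positivity) hn
  set D : ℝ := k * (T / n) with hDdef
  clear_value D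
  have hDpos : 0 < D := by rw [hDdef]; positivity
  have hnD : (n:ℝ) * D = 3 * W0 := by
    rw [hDdef]
    field_simp
    linarith [hkT]
  set E : ℝ := D/3 - D^2/(9*m) with hEdef
  clear_value E
  -- one step
  have step : ∀ i : ℕ, (i:ℝ) + 1 ≤ (n:ℝ) →
      w (((i:ℝ)+1) * (T/n)) + E ≤ w ((i:ℝ) * (T/n)) := by
    intro i hi
    set a : ℝ := (i:ℝ) * (T/n) with hadef
    set b : ℝ := ((i:ℝ)+1) * (T/n) with hbdef
    clear_value a b
    have ha : 0 ≤ a := by rw [hadef]; positivity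
    have hab : a ≤ b := by
      rw [hadef, hbdef]
      have : (0:ℝ) ≤ T/n := by positivity
      nlinarith
    have hb0 : 0 ≤ b := ha.trans hab
    have hbT : b ≤ T := by
      have hTn : (n:ℝ) * (T/n) = T := by field_simp
      have h0 : (0:ℝ) ≤ T/n := by positivity
      have := mul_le_mul_of_nonneg_right hi h0
      rw [hbdef]
      linarith [hTn, this]
    have H := hkey a b ha hab
    rw [← hw2 b hb0] at H
    rw [← hw3 b hb0, ← hw3 a ha] at H
    have hba : k * (b - a) = D := by rw [hDdef, hbdef, hadef]; ring
    rw [hba] at H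
    have hmwb : m ≤ w b := by
      rw [hmdef, hwdef]
      exact Real.rpow_le_rpow (hnonneg T hT0) (hmono b T hb0 hbT) (by norm_num)
    have := cube_step hmpos hmwb hDpos (hwnn a ha) H
    rw [hEdef]
    linarith
  -- telescoping
  have tele : ∀ i : ℕ, (i:ℝ) ≤ (n:ℝ) → w ((i:ℝ) * (T/n)) + (i:ℝ) * E ≤ W0 := by
    intro i
    induction i with
    | zero => intro _; simp [hW0def]
    | succ i ih =>
      intro hi
      push_cast at hi ⊢
      have h1 := step i hi
      have h2 := ih (by linarith)
      linarith
  have hfin := tele n le_rfl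
  rw [show (n:ℝ) * (T/n) = T from by field_simp] at hfin
  rw [← hmdef] at hfin
  have h9m : (0:ℝ) < 9*m := by linarith
  have hE9 : (n:ℝ) * ((9*m) * E) = (n:ℝ) * (3*m*D - D^2) := by
    rw [hEdef]; field_simp; ring
  have hA : (n:ℝ) * (3*m*D) = 9*m*W0 := by
    rw [show (n:ℝ)*(3*m*D) = 3*m*((n:ℝ)*D) from by ring, hnD]; ring
  have hB : (n:ℝ) * D^2 = 3*W0*D := by
    rw [show (n:ℝ)*D^2 = ((n:ℝ)*D)*D from by ring, hnD]
  have h1 : 9*m^2 + (n:ℝ)*((9*m)*E) ≤ 9*m*W0 := by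
    have := mul_le_mul_of_nonneg_left hfin h9m.le
    linarith [this]
  have h3 : 9*m^2 ≤ 3*W0*D := by
    rw [hE9] at h1
    linarith [h1, hA, hB]
  have h4 : 9*m^2*(n:ℝ) ≤ 3*W0*((n:ℝ)*D) := by
    have := mul_le_mul_of_nonneg_right h3 hNpos.le
    linarith [this]
  rw [hnD] at h4
  have hlt : W0^2 < (n:ℝ) * m^2 := by
    rw [div_lt_iff₀ (by positivity : (0:ℝ) < m^2)] at hn
    linarith
  linarith [h4, hlt]
end

section
/- Let ŝ : [0,∞) → ℝ be continuous, let δ : [0,∞) → (0,∞) satisfy δ(t) → 0 as t → ∞, and suppose there exist c > 0 and T₀ > 0 such that |ŝ(t+T) − ŝ(t)| ≥ cT for all t ≥ 0 and all T ∈ (0, T₀]. Let (τ_k)_{k≥0} be a strictly increasing sequence with τ₀ = 0, τ_k → ∞, and τ_{k+1} = inf{ t ≥ τ_k : |ŝ(t) − ŝ(τ_k)| ≥ δ(t) } for every k. Then for every T ∈ (0, T₀] there exists K ≥ 0 such that τ_{k+1} − τ_k ≤ T for all k ≥ K. In particular, inf_{k≥0}(τ_{k+1} − τ_k) = 0, i.e.,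 there is no strictly positive minimum inter-event time over [0,∞). -/
open Filter

/-- impossibility of a uniform positive minimum inter-event time.  Under
persistent average variation of the monitored output and an asymptotically vanishing
triggering threshold, for every `T ∈ (0, T₀]` the inter-event times are eventually `≤ T`;
in particular their infimum over all events is `0`. -/
theorem no_uniform_minimum_interevent_time
    (s δ : ℝ → ℝ) (c T₀ : ℝ) (τ : ℕ → ℝ)
    (hs : ContinuousOn s (Set.Ici (0:ℝ)))
    (hδpos : ∀ t : ℝ, 0 ≤ t → 0 < δ t)
    (hδ0 : Tendsto δ atTop (nhds 0))
    (hc : 0 < c) (hT₀ : 0 < T₀)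
    (hspeed : ∀ t : ℝ, 0 ≤ t → ∀ T : ℝ, 0 < T → T ≤ T₀ → c * T ≤ |s (t + T) - s t|)
    (hmono : StrictMono τ) (hτ0 : τ 0 = 0)
    (hτtop : Tendsto τ atTop atTop)
    (htrig : ∀ k : ℕ, τ (k + 1) = sInf {t : ℝ | τ k ≤ t ∧ δ t ≤ |s t - s (τ k)|}) :
    (∀ T : ℝ, 0 < T → T ≤ T₀ → ∃ K : ℕ, ∀ k : ℕ, K ≤ k → τ (k + 1) - τ k ≤ T) ∧
    (⨅ k : ℕ, (τ (k + 1) - τ k)) = 0 := by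
  have hτnonneg : ∀ k, 0 ≤ τ k := fun k => hτ0 ▸ hmono.monotone (Nat.zero_le k)
  have main : ∀ T : ℝ, 0 < T → T ≤ T₀ → ∃ K : ℕ, ∀ k : ℕ, K ≤ k → τ (k + 1) - τ k ≤ T := by
    intro T hT hTT₀
    have hcT : 0 < c * T := mul_pos hc hT
    have hev : ∀ᶠ t in atTop, δ t < c * T := hδ0.eventually_lt_const hcT
    obtain ⟨M, hM⟩ := eventually_atTop.mp hev
    obtain ⟨K, hK⟩ := eventually_atTop.mp (hτtop.eventually_ge_atTop M)
    refine ⟨K, fun k hk => ?_⟩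
    have hMτ : M ≤ τ k := hK k hk
    have hmem : τ k + T ∈ {t : ℝ | τ k ≤ t ∧ δ t ≤ |s t - s (τ k)|} := by
      refine ⟨le_add_of_nonneg_right hT.le, ?_⟩
      exact le_trans (hM _ (by linarith)).le (hspeed (τ k) (hτnonneg k) T hT hTT₀)
    have hbdd : BddBelow {t : ℝ | τ k ≤ t ∧ δ t ≤ |s t - s (τ k)|} :=
      ⟨τ k, fun t ht => ht.1⟩
    have h1 : τ (k + 1) ≤ τ k + T := (htrig k) ▸ csInf_le hbdd hmem
    linarith
  have pos : ∀ k, 0 < τ (k + 1) - τ k := fun k => sub_pos.mpr (hmono (Nat.lt_succ_self k))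
  refine ⟨main, le_antisymm ?_ (le_ciInf fun k => (pos k).le)⟩
  have hbdd : BddBelow (Set.range fun k => τ (k + 1) - τ k) := by
    refine ⟨0, ?_⟩
    rintro x ⟨k, rfl⟩
    exact (pos k).le
  refine le_of_forall_pos_le_add fun ε hε => ?_
  obtain ⟨K, hK⟩ := main (min ε T₀) (lt_min hε hT₀) (min_le_right _ _)
  calc (⨅ k : ℕ, (τ (k + 1) - τ k)) ≤ τ (K + 1) - τ K := ciInf_le hbdd K
    _ ≤ min ε T₀ := hK K le_rfl
    _ ≤ 0 + ε := by rw [zero_add]; exact min_le_left _ _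
end

section
/- Let a ∈ ℝ, δ ≥ 0, 0 ≤ σ < 1/2, and ε_i, ε_j ∈ ℝ satisfy |ε_i| ≤ δ + σ·|a + ε_i − ε_j| and |ε_j| ≤ δ + σ·|a + ε_i − ε_j|. Then |a + ε_i − ε_j| ≤ (|a| + 2δ)/(1−2σ), max(|ε_i|, |ε_j|) ≤ δ/(1−2σ) + (σ/(1−2σ))·|a|, and consequently |ε_i − ε_j| ≤ 2δ/(1−2σ) + (2σ/(1−2σ))·|a|. -/
/-! Both errors are bounded by the trigger threshold `δ + σ r`, where `r = |a + εᵢ - εⱼ|`; feeding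
this into the triangle inequality `r ≤ |a| + |εᵢ| + |εⱼ|` gives `r ≤ |a| + 2δ + 2σ r`, which
can be solved for `r` because `2σ < 1`. Substituting the bound on `r` back into the threshold
bounds the errors, and the bound on their difference follows by the triangle inequality. -/

lemma le_div_one_sub_of_le_add_mul {K : Type*} [Field K] [LinearOrder K] [IsStrictOrderedRing K]
    {x c k : K} (hk : k < 1) (h : x ≤ c + k * x) : x ≤ c / (1 - k) := by
  rw [le_div_iff₀ (sub_pos.2 hk)]
  linarith

lemma abs_sub_le_two_nsmul_max {K : Type*} [AddCommGroup K] [LinearOrder K] [IsOrderedAddMonoid K]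
    (x y : K) : |x - y| ≤ 2 • max |x| |y| := by
  rw [two_nsmul]
  exact (abs_sub x y).trans (add_le_add (le_max_left _ _) (le_max_right _ _))

theorem trigger_error_bounds_general
    (a δ σ εi εj : ℝ) (hσ0 : 0 ≤ σ) (hσ : σ < 1/2)
    (hi : |εi| ≤ δ + σ * |a + εi - εj|)
    (hj : |εj| ≤ δ + σ * |a + εi - εj|) :
    |a + εi - εj| ≤ (|a| + 2 * δ) / (1 - 2 * σ) ∧
    max |εi| |εj| ≤ δ / (1 - 2 * σ) + (σ / (1 - 2 * σ)) * |a| ∧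
    |εi - εj| ≤ 2 * δ / (1 - 2 * σ) + (2 * σ / (1 - 2 * σ)) * |a| := by
  have hpos : 0 < 1 - 2 * σ := by linarith
  have hr : |a + εi - εj| ≤ (|a| + 2 * δ) / (1 - 2 * σ) := by
    refine le_div_one_sub_of_le_add_mul (by linarith) ?_
    have htri := abs_add_three a εi (-εj)
    rw [abs_neg, ← sub_eq_add_neg] at htri
    linarith
  have hthreshold : δ + σ * |a + εi - εj| ≤ δ / (1 - 2 * σ) + (σ / (1 - 2 * σ)) * |a| :=
    calc δ + σ * |a + εi - εj| ≤ δ + σ * ((|a| + 2 * δ) / (1 - 2 * σ)) := by gcongr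
      _ = δ / (1 - 2 * σ) + (σ / (1 - 2 * σ)) * |a| := by
        rw [div_mul_eq_mul_div, ← add_div, eq_div_iff hpos.ne', add_mul, mul_assoc,
          div_mul_cancel₀ _ hpos.ne']
        ring
  have hmax := max_le (hi.trans hthreshold) (hj.trans hthreshold)
  refine ⟨hr, hmax, ?_⟩
  calc |εi - εj| ≤ 2 • max |εi| |εj| := abs_sub_le_two_nsmul_max εi εj
    _ ≤ 2 • (δ / (1 - 2 * σ) + (σ / (1 - 2 * σ)) * |a|) := by gcongr
    _ = 2 * δ / (1 - 2 * σ) + (2 * σ / (1 - 2 * σ)) * |a| := by rw [two_nsmul]; ring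

/-- bounds on the triggering-induced disturbance.  If
`|ε_i|, |ε_j| ≤ δ + σ|a + ε_i - ε_j|` with `δ ≥ 0` and `0 ≤ σ < 1/2`, then
`|a + ε_i - ε_j| ≤ (|a| + 2δ)/(1-2σ)`,
`max(|ε_i|,|ε_j|) ≤ δ/(1-2σ) + (σ/(1-2σ))|a|`, and
`|ε_i - ε_j| ≤ 2δ/(1-2σ) + (2σ/(1-2σ))|a|`. -/
theorem trigger_error_bounds
    (a δ σ εi εj : ℝ) (hδ : 0 ≤ δ) (hσ0 : 0 ≤ σ) (hσ : σ < 1/2)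
    (hi : |εi| ≤ δ + σ * |a + εi - εj|)
    (hj : |εj| ≤ δ + σ * |a + εi - εj|) :
    |a + εi - εj| ≤ (|a| + 2 * δ) / (1 - 2 * σ) ∧
    max |εi| |εj| ≤ δ / (1 - 2 * σ) + (σ / (1 - 2 * σ)) * |a| ∧
    |εi - εj| ≤ 2 * δ / (1 - 2 * σ) + (2 * σ / (1 - 2 * σ)) * |a| :=
  trigger_error_bounds_general a δ σ εi εj hσ0 hσ hi hj
end

section
/- Let n ≥ 1, let r₁, …, r_n > 0, and for λ > 0 let Δ_λ be the dilation (Δ_λ x)_i = λ^{r_i}·x_i on ℝⁿ. Let V₁, V₂ : ℝⁿ → ℝ be continuous with V_i(Δ_λ x) = λ^{m_i}·V_i(x) for all λ > 0 and x, where m₁, m₂ > 0, and suppose V₁ is positive definite (V₁ ≥ 0 with V₁(x) = 0 iff x = 0). Then for every x ∈ ℝⁿ: v·V₁(x)^{m₂/m₁} ≤ V₂(x) ≤ w·V₁(x)^{m₂/m₁}, where v = inf{ V₂(x) : V₁(x) = 1 } and w = sup{ V₂(x) : V₁(x) = 1 }. -/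
/-- The level set `{V₁ = 1}` of a continuous, positive-definite, weighted-homogeneous
function is compact. -/
lemma homogeneous_level_set_compact
    (n : ℕ) (hn : 1 ≤ n) (r : Fin n → ℝ) (hr : ∀ i, 0 < r i)
    (V₁ : (Fin n → ℝ) → ℝ) (m₁ : ℝ) (hm₁ : 0 < m₁)
    (hc₁ : Continuous V₁)
    (hhom₁ : ∀ lam : ℝ, 0 < lam → ∀ x : Fin n → ℝ,
      V₁ (fun i => lam ^ (r i) * x i) = lam ^ m₁ * V₁ x)
    (hnn : ∀ x, 0 ≤ V₁ x) (hdef : ∀ x, V₁ x = 0 ↔ x = 0) :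
    IsCompact {y : Fin n → ℝ | V₁ y = 1} := by
  haveI : Nonempty (Fin n) := ⟨⟨0, hn⟩⟩
  -- the weighted "sphere"
  set S : Set (Fin n → ℝ) := {y | (∀ i, |y i| ≤ 1) ∧ ∃ i, |y i| = 1} with hS
  have hSclosed : IsClosed S := by
    have h1 : IsClosed {y : Fin n → ℝ | ∀ i, |y i| ≤ 1} := by
      have he : {y : Fin n → ℝ | ∀ i, |y i| ≤ 1} = ⋂ i, {y | |y i| ≤ 1} := by
        ext y; simp
      rw [he]
      exact isClosed_iInter fun i =>
        isClosed_le ((continuous_abs.comp (continuous_apply i))) continuous_const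
    have h2 : IsClosed {y : Fin n → ℝ | ∃ i, |y i| = 1} := by
      have he : {y : Fin n → ℝ | ∃ i, |y i| = 1} = ⋃ i, {y | |y i| = 1} := by
        ext y; simp
      rw [he]
      exact isClosed_iUnion_of_finite fun i =>
        isClosed_eq ((continuous_abs.comp (continuous_apply i))) continuous_const
    exact h1.inter h2
  have hSbdd : S ⊆ Metric.closedBall 0 1 := by
    intro y hy
    rw [Metric.mem_closedBall, dist_zero_right]
    exact pi_norm_le_iff_of_nonneg zero_le_one |>.mpr fun i => by
      simpa [Real.norm_eq_abs] using hy.1 i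
  have hScompact : IsCompact S :=
    (Metric.isCompact_iff_isClosed_bounded).mpr
      ⟨hSclosed, (Metric.isBounded_closedBall).subset hSbdd⟩
  have hSne : S.Nonempty := by
    refine ⟨fun _ => 1, fun i => by norm_num, ⟨⟨0, hn⟩, by norm_num⟩⟩
  -- minimum of V₁ on S
  obtain ⟨y₀, hy₀S, hy₀min⟩ := hScompact.exists_isMinOn hSne hc₁.continuousOn
  have hy₀ne : y₀ ≠ 0 := by
    intro h
    obtain ⟨i, hi⟩ := hy₀S.2
    rw [h] at hi
    simp at hi
  set c : ℝ := V₁ y₀ with hc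
  have hcpos : 0 < c := by
    rcases lt_or_eq_of_le (hnn y₀) with h | h
    · exact h
    · exact absurd ((hdef y₀).mp h.symm) hy₀ne
  -- the bound
  set M : ℝ := c⁻¹ ^ (m₁⁻¹) with hM
  have hMnn : 0 ≤ M := Real.rpow_nonneg (inv_nonneg.mpr hcpos.le) _
  set B : ℝ := Finset.univ.sup' Finset.univ_nonempty (fun i => M ^ (r i)) with hB
  have hBnn : 0 ≤ B := by
    refine le_trans (Real.rpow_nonneg hMnn (r ⟨0, hn⟩)) ?_
    exact Finset.le_sup' (fun i => M ^ (r i)) (Finset.mem_univ _)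
  have hclosed : IsClosed {y : Fin n → ℝ | V₁ y = 1} :=
    isClosed_eq hc₁ continuous_const
  have hbdd : {y : Fin n → ℝ | V₁ y = 1} ⊆ Metric.closedBall 0 B := by
    intro x hx
    have hx1 : V₁ x = 1 := hx
    have hxne : x ≠ 0 := by
      intro h
      rw [h, (hdef 0).mpr rfl] at hx1
      norm_num at hx1
    -- homogeneous norm of x
    set μ : ℝ := Finset.univ.sup' Finset.univ_nonempty (fun i => |x i| ^ (r i)⁻¹) with hμ
    obtain ⟨j, hxj⟩ : ∃ j, x j ≠ 0 := by
      by_contra h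
      push_neg at h
      exact hxne (funext h)
    have hμpos : 0 < μ := by
      have h1 : 0 < |x j| ^ (r j)⁻¹ :=
        Real.rpow_pos_of_pos (abs_pos.mpr hxj) _
      exact lt_of_lt_of_le h1 (Finset.le_sup' (fun i => |x i| ^ (r i)⁻¹) (Finset.mem_univ j))
    have hle : ∀ i, |x i| ≤ μ ^ (r i) := by
      intro i
      have h1 : |x i| ^ (r i)⁻¹ ≤ μ := Finset.le_sup' (fun i => |x i| ^ (r i)⁻¹) (Finset.mem_univ i)
      have h2 : (|x i| ^ (r i)⁻¹) ^ (r i) ≤ μ ^ (r i) :=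
        Real.rpow_le_rpow (Real.rpow_nonneg (abs_nonneg _) _) h1 (hr i).le
      rwa [← Real.rpow_mul (abs_nonneg _),
        inv_mul_cancel₀ (hr i).ne', Real.rpow_one] at h2
    -- the rescaled point lies in S
    have hymem : (fun i => μ⁻¹ ^ (r i) * x i) ∈ S := by
      constructor
      · intro i
        have hpow : (0:ℝ) < μ ^ (r i) := Real.rpow_pos_of_pos hμpos _
        rw [abs_mul, abs_of_nonneg (Real.rpow_nonneg (inv_nonneg.mpr hμpos.le) _),
          Real.inv_rpow hμpos.le]
        rw [inv_mul_le_iff₀ hpow, mul_one]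
        exact hle i
      · obtain ⟨j', _, hj'⟩ := Finset.exists_mem_eq_sup' (Finset.univ_nonempty (α := Fin n))
          (fun i => |x i| ^ (r i)⁻¹)
        refine ⟨j', ?_⟩
        have hxj' : |x j'| = μ ^ (r j') := by
          have : (|x j'| ^ (r j')⁻¹) ^ (r j') = μ ^ (r j') := by rw [← hj']
          rwa [← Real.rpow_mul (abs_nonneg _),
            inv_mul_cancel₀ (hr j').ne', Real.rpow_one] at this
        have hpow : (0:ℝ) < μ ^ (r j') := Real.rpow_pos_of_pos hμpos _
        rw [abs_mul, abs_of_nonneg (Real.rpow_nonneg (inv_nonneg.mpr hμpos.le) _),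
          Real.inv_rpow hμpos.le, hxj', inv_mul_cancel₀ hpow.ne']
    -- V₁ on the rescaled point
    have hval : V₁ (fun i => μ⁻¹ ^ (r i) * x i) = (μ ^ m₁)⁻¹ := by
      rw [hhom₁ μ⁻¹ (inv_pos.mpr hμpos) x, hx1, mul_one, Real.inv_rpow hμpos.le]
    have hcle : c ≤ (μ ^ m₁)⁻¹ := by
      have := hy₀min hymem
      simpa [hval] using this
    have hμm : μ ^ m₁ ≤ c⁻¹ := by
      have hpow : (0:ℝ) < μ ^ m₁ := Real.rpow_pos_of_pos hμpos _
      have := inv_anti₀ hcpos hcle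
      rwa [inv_inv] at this
    have hμM : μ ≤ M := by
      have h2 : (μ ^ m₁) ^ (m₁⁻¹) ≤ c⁻¹ ^ (m₁⁻¹) :=
        Real.rpow_le_rpow (Real.rpow_nonneg hμpos.le _) hμm (inv_nonneg.mpr hm₁.le)
      rwa [← Real.rpow_mul hμpos.le, mul_inv_cancel₀ hm₁.ne', Real.rpow_one] at h2
    rw [Metric.mem_closedBall, dist_zero_right]
    refine pi_norm_le_iff_of_nonneg hBnn |>.mpr fun i => ?_
    have h1 : |x i| ≤ M ^ (r i) :=
      le_trans (hle i) (Real.rpow_le_rpow hμpos.le hμM (hr i).le)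
    calc ‖x i‖ = |x i| := rfl
      _ ≤ M ^ (r i) := h1
      _ ≤ B := Finset.le_sup' (fun i => M ^ (r i)) (Finset.mem_univ i)
  exact (Metric.isCompact_iff_isClosed_bounded).mpr
    ⟨hclosed, (Metric.isBounded_closedBall).subset hbdd⟩

/-- comparison of two weighted-homogeneous continuous functions.  If `V₁`
is positive definite and `V₁, V₂` are `r`-homogeneous of degrees `m₁, m₂ > 0` with respect
to the dilation `(Δ_λ x)_i = λ^{r_i} x_i`, then
`v · V₁(x)^{m₂/m₁} ≤ V₂(x) ≤ w · V₁(x)^{m₂/m₁}` where `v` and `w` are the infimum and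
supremum of `V₂` on the level set `{V₁ = 1}`. -/
theorem homogeneous_comparison
    (n : ℕ) (hn : 1 ≤ n) (r : Fin n → ℝ) (hr : ∀ i, 0 < r i)
    (V₁ V₂ : (Fin n → ℝ) → ℝ) (m₁ m₂ : ℝ) (hm₁ : 0 < m₁) (hm₂ : 0 < m₂)
    (hc₁ : Continuous V₁) (hc₂ : Continuous V₂)
    (hhom₁ : ∀ lam : ℝ, 0 < lam → ∀ x : Fin n → ℝ,
      V₁ (fun i => lam ^ (r i) * x i) = lam ^ m₁ * V₁ x)
    (hhom₂ : ∀ lam : ℝ, 0 < lam → ∀ x : Fin n → ℝ,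
      V₂ (fun i => lam ^ (r i) * x i) = lam ^ m₂ * V₂ x)
    (hnn : ∀ x, 0 ≤ V₁ x) (hdef : ∀ x, V₁ x = 0 ↔ x = 0) :
    ∀ x : Fin n → ℝ,
      sInf (V₂ '' {y | V₁ y = 1}) * (V₁ x) ^ (m₂ / m₁) ≤ V₂ x ∧
      V₂ x ≤ sSup (V₂ '' {y | V₁ y = 1}) * (V₁ x) ^ (m₂ / m₁) := by
  have hK : IsCompact {y : Fin n → ℝ | V₁ y = 1} :=
    homogeneous_level_set_compact n hn r hr V₁ m₁ hm₁ hc₁ hhom₁ hnn hdef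
  have hSc : IsCompact (V₂ '' {y | V₁ y = 1}) := hK.image hc₂
  have hbb : BddBelow (V₂ '' {y | V₁ y = 1}) := hSc.bddBelow
  have hba : BddAbove (V₂ '' {y | V₁ y = 1}) := hSc.bddAbove
  intro x
  by_cases hx : x = 0
  · subst hx
    have h10 : V₁ 0 = 0 := (hdef 0).mpr rfl
    have h20 : V₂ 0 = 0 := by
      have h := hhom₂ 2 (by norm_num) 0
      have h2 : (fun i : Fin n => (2:ℝ) ^ (r i) * (0 : Fin n → ℝ) i) = 0 := by
        funext i; simp
      rw [h2] at h
      have hgt : (1:ℝ) < 2 ^ m₂ :=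
        Real.one_lt_rpow_iff_of_pos (by norm_num) |>.mpr (Or.inl ⟨one_lt_two, hm₂⟩)
      nlinarith [h, hgt]
    rw [h10, h20, Real.zero_rpow (div_ne_zero hm₂.ne' hm₁.ne')]
    simp
  · have hV1pos : 0 < V₁ x :=
      lt_of_le_of_ne (hnn x) (fun h => hx ((hdef x).mp h.symm))
    set lam : ℝ := (V₁ x) ^ (-(m₁⁻¹)) with hlam
    have hlampos : 0 < lam := Real.rpow_pos_of_pos hV1pos _
    have hy1 : V₁ (fun i => lam ^ (r i) * x i) = 1 := by
      have h := hhom₁ lam hlampos x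
      rw [hlam, ← Real.rpow_mul hV1pos.le, neg_mul,
        inv_mul_cancel₀ hm₁.ne', Real.rpow_neg_one] at h
      rw [h, inv_mul_cancel₀ hV1pos.ne']
    have hy2 : V₂ (fun i => lam ^ (r i) * x i) = (V₁ x) ^ (-(m₂/m₁)) * V₂ x := by
      have h := hhom₂ lam hlampos x
      rw [hlam, ← Real.rpow_mul hV1pos.le] at h
      have hexp : -(m₁⁻¹) * m₂ = -(m₂/m₁) := by ring
      rwa [hexp] at h
    have hmem : V₂ (fun i => lam ^ (r i) * x i) ∈ V₂ '' {y | V₁ y = 1} :=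
      ⟨_, hy1, rfl⟩
    have h1 : sInf (V₂ '' {y | V₁ y = 1}) ≤ (V₁ x) ^ (-(m₂/m₁)) * V₂ x := by
      rw [← hy2]; exact csInf_le hbb hmem
    have h2 : (V₁ x) ^ (-(m₂/m₁)) * V₂ x ≤ sSup (V₂ '' {y | V₁ y = 1}) := by
      rw [← hy2]; exact le_csSup hba hmem
    have ht : 0 < (V₁ x) ^ (m₂/m₁) := Real.rpow_pos_of_pos hV1pos _
    have hcancel : (V₁ x) ^ (-(m₂/m₁)) * (V₁ x) ^ (m₂/m₁) = 1 := by
      rw [← Real.rpow_add hV1pos]; simp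
    have key : (V₁ x) ^ (-(m₂/m₁)) * V₂ x * (V₁ x) ^ (m₂/m₁) = V₂ x := by
      have hr' : (V₁ x) ^ (-(m₂/m₁)) * V₂ x * (V₁ x) ^ (m₂/m₁)
          = V₂ x * ((V₁ x) ^ (-(m₂/m₁)) * (V₁ x) ^ (m₂/m₁)) := by ring
      rw [hr', hcancel, mul_one]
    constructor
    · calc sInf (V₂ '' {y | V₁ y = 1}) * (V₁ x) ^ (m₂/m₁)
          ≤ ((V₁ x) ^ (-(m₂/m₁)) * V₂ x) * (V₁ x) ^ (m₂/m₁) :=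
            mul_le_mul_of_nonneg_right h1 ht.le
        _ = V₂ x := key
    · calc V₂ x = ((V₁ x) ^ (-(m₂/m₁)) * V₂ x) * (V₁ x) ^ (m₂/m₁) := key.symm
        _ ≤ sSup (V₂ '' {y | V₁ y = 1}) * (V₁ x) ^ (m₂/m₁) :=
            mul_le_mul_of_nonneg_right h2 ht.le
end
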